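/- arXiv:2001.08262 — 5 statements merged into one kernel-verified Lean document; each statement's English description precedes it below -/
import Mathlib

section
/- If ν₁ and ν₂ are probability measures on ℝ with finite second moments e₁ = ∫ x² ν₁(dx) and e₂ = ∫ x² ν₂(dx), then the second moment of B[ν₁,ν₂] equals (e₁ + e₂)/2. -/
open MeasureTheory Real

/-- The uniform probability measure on `[0, 2π)`. -/
noncomputable def thetaUnif : Measure ℝ :=
  (ENNReal.ofReal (2 * π))⁻¹ • (volume.restrict (Set.Ico 0 (2 * π)))

/-- The Kac collision map: `B[ν₁,ν₂]` is the law of `X cos θ + Y sin θ`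
where `X ~ ν₁`, `Y ~ ν₂` and `θ` is uniform on `[0,2π)`, all independent. -/
noncomputable def collB (ν₁ ν₂ : Measure ℝ) : Measure ℝ :=
  Measure.map (fun p : ℝ × ℝ × ℝ => p.1 * Real.cos p.2.2 + p.2.1 * Real.sin p.2.2)
    (ν₁.prod (ν₂.prod thetaUnif))

instance : IsProbabilityMeasure thetaUnif := by
  constructor
  simp only [thetaUnif, Measure.smul_apply, Measure.restrict_apply MeasurableSet.univ,
    Set.univ_inter, Real.volume_Ico, sub_zero, smul_eq_mul]
  rw [ENNReal.inv_mul_cancel]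
  · simp [Real.pi_pos, two_pi_pos]
  · exact ENNReal.ofReal_ne_top

lemma theta_integral (x y : ℝ) :
    ∫ θ, (x * Real.cos θ + y * Real.sin θ) ^ 2 ∂thetaUnif = (x ^ 2 + y ^ 2) / 2 := by
  have h2π : (0:ℝ) ≤ 2 * π := (two_pi_pos).le
  rw [thetaUnif, integral_smul_measure]
  have hIco : ∫ θ in Set.Ico 0 (2*π), (x * Real.cos θ + y * Real.sin θ) ^ 2
      = ∫ θ in (0:ℝ)..(2*π), (x * Real.cos θ + y * Real.sin θ) ^ 2 := by
    rw [MeasureTheory.integral_Ico_eq_integral_Ioo, ← MeasureTheory.integral_Ioc_eq_integral_Ioo,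
      intervalIntegral.integral_of_le h2π]
  have hint : ∫ θ in (0:ℝ)..(2*π), (x * Real.cos θ + y * Real.sin θ) ^ 2 = π * (x^2 + y^2) := by
    have hexp : ∀ θ : ℝ, (x * Real.cos θ + y * Real.sin θ) ^ 2
        = x^2 * Real.cos θ ^ 2 + (y^2 * Real.sin θ ^ 2 + (2*x*y) * (Real.sin θ * Real.cos θ)) := by
      intro θ; ring
    have i1 : IntervalIntegrable (fun θ => x^2 * Real.cos θ ^ 2) volume 0 (2*π) :=
      (Continuous.intervalIntegrable (by continuity) _ _)
    have i2 : IntervalIntegrable (fun θ => y^2 * Real.sin θ ^ 2) volume 0 (2*π) :=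
      (Continuous.intervalIntegrable (by continuity) _ _)
    have i3 : IntervalIntegrable (fun θ => (2*x*y) * (Real.sin θ * Real.cos θ)) volume 0 (2*π) :=
      (Continuous.intervalIntegrable (by continuity) _ _)
    simp only [hexp]
    rw [intervalIntegral.integral_add i1 (i2.add i3), intervalIntegral.integral_add i2 i3,
      intervalIntegral.integral_const_mul, intervalIntegral.integral_const_mul,
      intervalIntegral.integral_const_mul, integral_cos_sq, integral_sin_sq,
      integral_sin_mul_cos₁]
    simp [Real.sin_two_pi, Real.cos_two_pi]
    ring
  rw [hIco, hint]
  have : ((ENNReal.ofReal (2 * π))⁻¹).toReal = (2 * π)⁻¹ := by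
    rw [ENNReal.toReal_inv, ENNReal.toReal_ofReal h2π]
  rw [this, smul_eq_mul]
  field_simp

theorem collB_second_moment (ν₁ ν₂ : Measure ℝ)
    [IsProbabilityMeasure ν₁] [IsProbabilityMeasure ν₂]
    (h₁ : Integrable (fun x : ℝ => x ^ 2) ν₁) (h₂ : Integrable (fun x : ℝ => x ^ 2) ν₂) :
    ∫ x, x ^ 2 ∂(collB ν₁ ν₂)
      = ((∫ x, x ^ 2 ∂ν₁) + ∫ x, x ^ 2 ∂ν₂) / 2 := by
  set μ := ν₁.prod (ν₂.prod thetaUnif) with hμ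
  have hmeas : Measurable (fun p : ℝ × ℝ × ℝ => p.1 * Real.cos p.2.2 + p.2.1 * Real.sin p.2.2) :=
    (measurable_fst.mul (Real.continuous_cos.measurable.comp (measurable_snd.comp measurable_snd))).add
      (((measurable_fst.comp measurable_snd)).mul
        (Real.continuous_sin.measurable.comp (measurable_snd.comp measurable_snd)))
  -- integrability of the squared collision map on the product
  have hfst : Integrable (fun p : ℝ × ℝ × ℝ => p.1 ^ 2) μ := by
    have hm : Measure.map Prod.fst μ = ν₁ := by
      rw [hμ, Measure.map_fst_prod]; simp
    exact (Integrable.comp_measurable (by rwa [hm]) measurable_fst)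
  have hsnd : Integrable (fun p : ℝ × ℝ × ℝ => p.2.1 ^ 2) μ := by
    have hm : Measure.map (fun p : ℝ × ℝ × ℝ => p.2.1) μ = ν₂ := by
      have : (fun p : ℝ × ℝ × ℝ => p.2.1) = Prod.fst ∘ Prod.snd := rfl
      rw [this, ← Measure.map_map measurable_fst measurable_snd, hμ, Measure.map_snd_prod]
      simp [Measure.map_fst_prod]
    have h' : Integrable ((fun y : ℝ => y ^ 2) ∘ (fun p : ℝ × ℝ × ℝ => p.2.1)) μ :=
      Integrable.comp_measurable (by rwa [hm]) (measurable_fst.comp measurable_snd)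
    exact h'
  have hg : Integrable (fun p : ℝ × ℝ × ℝ =>
      (p.1 * Real.cos p.2.2 + p.2.1 * Real.sin p.2.2) ^ 2) μ := by
    refine Integrable.mono' ((hfst.const_mul 2).add (hsnd.const_mul 2))
      ((hmeas.pow_const 2).aestronglyMeasurable) ?_
    filter_upwards with p
    have hb : (p.1 * Real.cos p.2.2 + p.2.1 * Real.sin p.2.2) ^ 2
        ≤ 2 * p.1 ^ 2 + 2 * p.2.1 ^ 2 := by
      have h1 : (p.1 * Real.cos p.2.2) ^ 2 ≤ p.1 ^ 2 := by
        have := Real.cos_sq_le_one p.2.2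
        nlinarith [sq_nonneg p.1, sq_nonneg (Real.cos p.2.2)]
      have h2 : (p.2.1 * Real.sin p.2.2) ^ 2 ≤ p.2.1 ^ 2 := by
        have := Real.sin_sq_le_one p.2.2
        nlinarith [sq_nonneg p.2.1, sq_nonneg (Real.sin p.2.2)]
      nlinarith [sq_nonneg (p.1 * Real.cos p.2.2 - p.2.1 * Real.sin p.2.2)]
    have : (0:ℝ) ≤ (p.1 * Real.cos p.2.2 + p.2.1 * Real.sin p.2.2) ^ 2 := sq_nonneg _
    rw [Real.norm_eq_abs, abs_of_nonneg this]
    exact hb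
  -- push forward
  rw [collB, integral_map hmeas.aemeasurable
    (f := fun x : ℝ => x ^ 2) ((continuous_pow 2).aestronglyMeasurable)]
  rw [← hμ]
  rw [MeasureTheory.integral_prod _ hg]
  have hinner : ∀ x : ℝ,
      (∫ q : ℝ × ℝ, (x * Real.cos q.2 + q.1 * Real.sin q.2) ^ 2 ∂(ν₂.prod thetaUnif))
        = (x ^ 2 + ∫ y, y ^ 2 ∂ν₂) / 2 ∨ True := fun _ => Or.inr trivial
  have key : ∀ᵐ x ∂ν₁,
      (∫ q : ℝ × ℝ, (x * Real.cos q.2 + q.1 * Real.sin q.2) ^ 2 ∂(ν₂.prod thetaUnif))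
        = (x ^ 2 + ∫ y, y ^ 2 ∂ν₂) / 2 := by
    filter_upwards [hg.prod_right_ae] with x hx
    rw [MeasureTheory.integral_prod _ hx]
    have hθ : ∀ y : ℝ, (∫ θ, (x * Real.cos θ + y * Real.sin θ) ^ 2 ∂thetaUnif)
        = (x ^ 2 + y ^ 2) / 2 := fun y => theta_integral x y
    simp only [hθ]
    have : Integrable (fun y : ℝ => (x ^ 2 + y ^ 2) / 2) ν₂ :=
      ((integrable_const (x ^ 2)).add h₂).div_const 2
    rw [show (fun y : ℝ => (x ^ 2 + y ^ 2) / 2) = fun y : ℝ => (x ^ 2 + y ^ 2) / 2 from rfl]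
    simp only [add_div]
    rw [integral_add ((integrable_const (x ^ 2)).div_const 2) (h₂.div_const 2),
      integral_div, integral_div, integral_const]
    simp [measure_univ, add_div]
  rw [integral_congr_ae key]
  have : Integrable (fun x : ℝ => (x ^ 2 + ∫ y, y ^ 2 ∂ν₂) / 2) ν₁ :=
    (h₁.add (integrable_const _)).div_const 2
  simp only [add_div]
  rw [integral_add (h₁.div_const 2) ((integrable_const _).div_const 2), integral_div,
    integral_div, integral_const]
  simp [measure_univ, add_div]
end

section
/- If ν₁ and ν₂ are probability measures on ℝ with finite r-th absolute moments n_r = ∫ |x|^r ν₁(dx) and m_r = ∫ |x|^r ν₂(dx) for some r > 0, then ∫ |x|^r B[ν₁,ν₂](dx) ≤ 2^{max(r/2,1)} · ((n_r + m_r)/2) · ∫₀^{2π} |cos θ|^r dθ/(2π). -/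
/-!
Write `x cos θ + y sin θ = √(x² + y²) cos (θ - φ)`. Since `θ` is uniform on a full period, the
`θ`-average of `|x cos θ + y sin θ| ^ r` is exactly `√(x² + y²) ^ r` times the average of
`|cos θ| ^ r`. The elementary bound `(a + b) ^ s ≤ 2 ^ (max s 1 - 1) (a ^ s + b ^ s)` with
`s = r / 2`, `a = x²`, `b = y²` then separates the variables. Integrating in `ℝ≥0∞` (Tonelli)
avoids any integrability argument on the triple product.
-/

open MeasureTheory Real
open scoped ENNReal

lemma rpow_add_le_two_rpow_mul_rpow_add_rpow {s a b : ℝ} (hs : 0 ≤ s) (ha : 0 ≤ a) (hb : 0 ≤ b) :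
    (a + b) ^ s ≤ 2 ^ (max s 1 - 1) * (a ^ s + b ^ s) := by
  rcases le_total s 1 with hs1 | hs1
  · rw [max_eq_right hs1, sub_self, rpow_zero, one_mul]
    exact rpow_add_le_add_rpow ha hb hs hs1
  · rw [max_eq_left hs1]
    lift a to NNReal using ha
    lift b to NNReal using hb
    exact_mod_cast NNReal.rpow_add_le_mul_rpow_add_rpow a b hs1

lemma sqrt_sq_add_sq_rpow_le {r : ℝ} (hr : 0 ≤ r) (x y : ℝ) :
    √(x ^ 2 + y ^ 2) ^ r ≤ 2 ^ (max (r / 2) 1 - 1) * (|x| ^ r + |y| ^ r) := by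
  have sq_rpow_half : ∀ a : ℝ, (a ^ 2) ^ (r / 2) = |a| ^ r := fun a => by
    rw [← sq_abs, ← rpow_natCast, ← rpow_mul (abs_nonneg a)]
    norm_num [mul_div_cancel₀]
  rw [sqrt_eq_rpow, ← rpow_mul (by positivity), one_div_mul_eq_div, ← sq_rpow_half x,
    ← sq_rpow_half y]
  exact rpow_add_le_two_rpow_mul_rpow_add_rpow (by positivity) (sq_nonneg x) (sq_nonneg y)

lemma exists_mul_cos_add_mul_sin_eq (x y : ℝ) :
    ∃ φ, ∀ θ, x * cos θ + y * sin θ = √(x ^ 2 + y ^ 2) * cos (θ - φ) := by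
  let z : ℂ := ⟨x, y⟩
  refine ⟨z.arg, fun θ => ?_⟩
  have hnorm : ‖z‖ = √(x ^ 2 + y ^ 2) := Complex.norm_eq_sqrt_sq_add_sq z
  rw [← hnorm, cos_sub]
  have hre : ‖z‖ * cos z.arg = x := Complex.norm_mul_cos_arg z
  have him : ‖z‖ * sin z.arg = y := Complex.norm_mul_sin_arg z
  linear_combination -cos θ * hre - sin θ * him

instance inst_s3 : IsProbabilityMeasure thetaUnif := by
  constructor
  rw [thetaUnif, Measure.smul_apply, Measure.restrict_apply MeasurableSet.univ, Set.univ_inter,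
    volume_Ico, smul_eq_mul, sub_zero]
  exact ENNReal.inv_mul_cancel (ENNReal.ofReal_pos.mpr (by positivity)).ne' ENNReal.ofReal_ne_top

lemma integral_thetaUnif_comp_sub {f : ℝ → ℝ} (hf : Function.Periodic f (2 * π)) (φ : ℝ) :
    ∫ θ, f (θ - φ) ∂thetaUnif = ∫ θ, f θ ∂thetaUnif := by
  have h_ico : ∀ g : ℝ → ℝ, ∫ θ in Set.Ico 0 (2 * π), g θ = ∫ θ in (0 : ℝ)..(2 * π), g θ :=
    fun g => by
      rw [intervalIntegral.integral_of_le (by positivity), integral_Ioc_eq_integral_Ioo,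
        integral_Ico_eq_integral_Ioo]
  rw [thetaUnif, integral_smul_measure, integral_smul_measure, h_ico, h_ico,
    intervalIntegral.integral_comp_sub_right, zero_sub, sub_eq_neg_add,
    hf.intervalIntegral_add_eq (-φ) 0, zero_add]

lemma integral_thetaUnif_abs_mul_cos_add_mul_sin_rpow (r x y : ℝ) :
    ∫ θ, |x * cos θ + y * sin θ| ^ r ∂thetaUnif
      = √(x ^ 2 + y ^ 2) ^ r * ∫ θ, |cos θ| ^ r ∂thetaUnif := by
  obtain ⟨φ, hφ⟩ := exists_mul_cos_add_mul_sin_eq x y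
  have hper : Function.Periodic (fun θ => |cos θ| ^ r) (2 * π) := fun θ => by
    simp only [cos_add_two_pi]
  simp_rw [hφ, abs_mul, abs_of_nonneg (sqrt_nonneg _), mul_rpow (sqrt_nonneg _) (abs_nonneg _)]
  rw [integral_const_mul, integral_thetaUnif_comp_sub hper]

lemma Continuous.integrable_thetaUnif {f : ℝ → ℝ} (hf : Continuous f) :
    Integrable f thetaUnif :=
  (hf.integrableOn_Icc.mono_set Set.Ico_subset_Icc_self).smul_measure
    (ENNReal.inv_ne_top.2 (ENNReal.ofReal_pos.2 (by positivity)).ne')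

lemma lintegral_thetaUnif_ofReal_abs_mul_cos_add_mul_sin_rpow {r : ℝ} (hr : 0 ≤ r) (x y : ℝ) :
    ∫⁻ θ, ENNReal.ofReal (|x * cos θ + y * sin θ| ^ r) ∂thetaUnif
      = ENNReal.ofReal (√(x ^ 2 + y ^ 2) ^ r * ∫ θ, |cos θ| ^ r ∂thetaUnif) := by
  have hcont : Continuous fun θ => |x * cos θ + y * sin θ| ^ r :=
    (by fun_prop : Continuous fun θ => |x * cos θ + y * sin θ|).rpow_const fun _ => Or.inr hr
  rw [← integral_thetaUnif_abs_mul_cos_add_mul_sin_rpow, ofReal_integral_eq_lintegral_ofReal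
    hcont.integrable_thetaUnif (ae_of_all _ fun _ => by positivity)]

lemma lintegral_collB (ν₁ ν₂ : Measure ℝ) [SFinite ν₂] {f : ℝ → ℝ≥0∞} (hf : Measurable f) :
    ∫⁻ z, f z ∂collB ν₁ ν₂
      = ∫⁻ x, ∫⁻ y, ∫⁻ θ, f (x * cos θ + y * sin θ) ∂thetaUnif ∂ν₂ ∂ν₁ := by
  have hcoll : Measurable fun p : ℝ × ℝ × ℝ => p.1 * cos p.2.2 + p.2.1 * sin p.2.2 := by
    fun_prop
  have hF : Measurable fun p : ℝ × ℝ × ℝ => f (p.1 * cos p.2.2 + p.2.1 * sin p.2.2) :=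
    hf.comp hcoll
  rw [collB, lintegral_map hf hcoll, lintegral_prod _ hF.aemeasurable]
  exact lintegral_congr fun x => lintegral_prod _ (hF.comp measurable_prodMk_left).aemeasurable

lemma lintegral_lintegral_ofReal_add {α β : Type*} [MeasurableSpace α] [MeasurableSpace β]
    {μ : Measure α} {ν : Measure β} [IsProbabilityMeasure μ] [IsProbabilityMeasure ν]
    {f : α → ℝ} {g : β → ℝ} (hf : Integrable f μ) (hg : Integrable g ν)
    (hf₀ : ∀ x, 0 ≤ f x) (hg₀ : ∀ y, 0 ≤ g y) :
    ∫⁻ x, ∫⁻ y, ENNReal.ofReal (f x + g y) ∂ν ∂μ = ENNReal.ofReal (∫ x, f x ∂μ + ∫ y, g y ∂ν) := by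
  simp_rw [ENNReal.ofReal_add (hf₀ _) (hg₀ _), lintegral_add_left' aemeasurable_const,
    lintegral_const, measure_univ, mul_one]
  rw [lintegral_add_right' _ aemeasurable_const, lintegral_const, measure_univ, mul_one,
    ENNReal.ofReal_add (integral_nonneg hf₀) (integral_nonneg hg₀),
    ofReal_integral_eq_lintegral_ofReal hf (ae_of_all _ hf₀),
    ofReal_integral_eq_lintegral_ofReal hg (ae_of_all _ hg₀)]

theorem collB_rth_moment (ν₁ ν₂ : Measure ℝ)
    [IsProbabilityMeasure ν₁] [IsProbabilityMeasure ν₂] (r : ℝ) (hr : 0 < r)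
    (h₁ : Integrable (fun x : ℝ => |x| ^ r) ν₁) (h₂ : Integrable (fun x : ℝ => |x| ^ r) ν₂) :
    ∫ x, |x| ^ r ∂(collB ν₁ ν₂)
      ≤ 2 ^ (max (r / 2) 1) * (((∫ x, |x| ^ r ∂ν₁) + ∫ x, |x| ^ r ∂ν₂) / 2)
        * ∫ θ, |Real.cos θ| ^ r ∂thetaUnif := by
  set I := ∫ θ, |cos θ| ^ r ∂thetaUnif
  have hI : 0 ≤ I := integral_nonneg fun θ => by positivity
  set C : ℝ := 2 ^ (max (r / 2) 1 - 1) with hC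
  have hmeas : Measurable fun z : ℝ => |z| ^ r := by fun_prop
  have hmoment : ∫⁻ z, ENNReal.ofReal (|z| ^ r) ∂collB ν₁ ν₂
      ≤ ENNReal.ofReal (∫ x, C * I * |x| ^ r ∂ν₁ + ∫ y, C * I * |y| ^ r ∂ν₂) := by
    rw [lintegral_collB _ _ hmeas.ennreal_ofReal, ← lintegral_lintegral_ofReal_add
      (h₁.const_mul _) (h₂.const_mul _) (fun _ => by positivity) (fun _ => by positivity)]
    refine lintegral_mono fun x => lintegral_mono fun y => ?_
    rw [lintegral_thetaUnif_ofReal_abs_mul_cos_add_mul_sin_rpow hr.le]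
    refine ENNReal.ofReal_le_ofReal ?_
    linarith [mul_le_mul_of_nonneg_right (sqrt_sq_add_sq_rpow_le hr.le x y) hI]
  rw [integral_eq_lintegral_of_nonneg_ae (ae_of_all _ fun _ => by positivity)
    hmeas.aestronglyMeasurable]
  refine (ENNReal.toReal_le_of_le_ofReal (by positivity) hmoment).trans_eq ?_
  rw [integral_const_mul, integral_const_mul, hC, rpow_sub two_pos, rpow_one]
  ring
end

section
/- Let μ > 0, λ > 0, a ≥ 0 constants, and let h : [0,∞) → [0,∞) be differentiable with h(0) = h₀ and h'(t) ≤ −(μ/2) h(t) + λ a + 2λ h(t)^{1/2} a^{1/2} for all t ≥ 0. Then there exists a constant C depending only on λ and μ such that h(t) ≤ 2 e^{−μt/2} h₀ + C a for all t ≥ 0. -/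
open Real

set_option maxHeartbeats 1000000 in

theorem gronwall_upoc (lam mu : ℝ) (hlam : 0 < lam) (hmu : 0 < mu) :
    ∃ C : ℝ, ∀ a : ℝ, 0 ≤ a → ∀ h d : ℝ → ℝ,
      (∀ t : ℝ, 0 ≤ t → 0 ≤ h t) →
      (∀ t : ℝ, 0 ≤ t → HasDerivAt h (d t) t) →
      (∀ t : ℝ, 0 ≤ t →
        d t ≤ -(mu / 2) * h t + lam * a + 2 * lam * Real.sqrt (h t) * Real.sqrt a) →
      ∀ t : ℝ, 0 ≤ t → h t ≤ 2 * Real.exp (-(mu * t / 2)) * h 0 + C * a := by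
  obtain ⟨K, hK⟩ : ∃ K : ℝ, K = 1 + 6 * lam / mu := ⟨_, rfl⟩
  have hK1 : 1 < K := by
    have : 0 < 6 * lam / mu := by positivity
    linarith [hK.ge]
  have hKmul : mu / 2 * K = mu / 2 + 3 * lam := by
    rw [hK]; field_simp; ring
  obtain ⟨C, hC⟩ : ∃ C : ℝ, C = 2 * K ^ 2 := ⟨_, rfl⟩
  have hCpos : 0 < C := by rw [hC]; positivity
  refine ⟨C, ?_⟩
  intro a ha h d hh hd hdle t ht
  -- it suffices to prove the bound with `a` replaced by `a + ε/C` for every `ε > 0`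
  refine le_of_forall_pos_le_add (fun ε hε => ?_)
  obtain ⟨a', ha'⟩ : ∃ a' : ℝ, a' = a + ε / C := ⟨_, rfl⟩
  have hεC : 0 < ε / C := by positivity
  have ha'pos : 0 < a' := by rw [ha']; positivity
  have haa' : a ≤ a' := by rw [ha']; linarith
  obtain ⟨s, hs⟩ : ∃ s : ℝ, s = Real.sqrt a' := ⟨_, rfl⟩
  have hspos : 0 < s := hs ▸ Real.sqrt_pos.mpr ha'pos
  have hs2 : s ^ 2 = a' := by rw [hs]; exact Real.sq_sqrt ha'pos.le
  obtain ⟨b, hb⟩ : ∃ b : ℝ, b = Real.sqrt (h 0) := ⟨_, rfl⟩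
  have hbnn : 0 ≤ b := hb ▸ Real.sqrt_nonneg _
  have hb2 : b ^ 2 = h 0 := by rw [hb]; exact Real.sq_sqrt (hh 0 le_rfl)
  -- the supersolution
  obtain ⟨g, hg⟩ : ∃ g : ℝ → ℝ, g = fun x => Real.exp (-(mu / 4) * x) * b + K * s :=
    ⟨_, rfl⟩
  obtain ⟨B, hBdef⟩ : ∃ B : ℝ → ℝ, B = fun x => (g x) ^ 2 := ⟨_, rfl⟩
  obtain ⟨B', hB'def⟩ : ∃ B' : ℝ → ℝ,
      B' = fun x => 2 * g x * (Real.exp (-(mu / 4) * x) * -(mu / 4) * b) := ⟨_, rfl⟩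
  have hKs : 0 < K * s := mul_pos (by linarith) hspos
  have hgeval : ∀ x, g x = Real.exp (-(mu / 4) * x) * b + K * s := fun x => by rw [hg]
  have hBeval : ∀ x, B x = g x ^ 2 := fun x => by rw [hBdef]
  have hgpos : ∀ x, 0 < g x := by
    intro x
    have h1 : 0 ≤ Real.exp (-(mu / 4) * x) * b := by positivity
    rw [hgeval]; linarith
  have hglb : ∀ x, K * s ≤ g x := by
    intro x
    have h1 : 0 ≤ Real.exp (-(mu / 4) * x) * b := by positivity
    rw [hgeval]; linarith
  have hBderiv : ∀ x, HasDerivAt B (B' x) x := by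
    intro x
    have hgd : HasDerivAt g (Real.exp (-(mu / 4) * x) * -(mu / 4) * b) x := by
      have he : HasDerivAt (fun x : ℝ => Real.exp (-(mu / 4) * x))
          (Real.exp (-(mu / 4) * x) * -(mu / 4)) x := by
        simpa using ((hasDerivAt_id x).const_mul (-(mu / 4))).exp
      rw [hg]
      exact (he.mul_const b).add_const (K * s)
    have h2 := hgd.pow 2
    have h3 : B' x = 2 * g x ^ (2 - 1) * (Real.exp (-(mu / 4) * x) * -(mu / 4) * b) := by
      simp only [hB'def]; norm_num
    rw [hBdef, h3]
    exact h2
  -- apply the fencing theorem on [0, t]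
  have key : h t ≤ B t := by
    refine image_le_of_deriv_right_lt_deriv_boundary
      (f := h) (f' := d) (a := 0) (b := t) (B := B) (B' := B')
      (fun x hx => ((hd x hx.1).continuousAt).continuousWithinAt)
      (fun x hx => (hd x hx.1).hasDerivWithinAt)
      ?_ hBderiv ?_ ⟨ht, le_rfl⟩
    · -- h 0 ≤ B 0
      have hB0 : B 0 = (b + K * s) ^ 2 := by
        rw [hBeval, hgeval]; norm_num
      rw [hB0, ← hb2]
      nlinarith [hbnn, hKs]
    · -- strict differential inequality at contact points
      intro x hx hcontact
      have hx0 : 0 ≤ x := hx.1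
      have hsq : Real.sqrt (h x) = g x := by
        rw [hcontact, hBeval]
        exact Real.sqrt_sq (hgpos x).le
      have h1 : d x ≤ -(mu / 2) * h x + lam * a + 2 * lam * Real.sqrt (h x) * Real.sqrt a :=
        hdle x hx0
      have hsa : Real.sqrt a ≤ s := by rw [hs]; exact Real.sqrt_le_sqrt haa'
      have hsann : 0 ≤ Real.sqrt a := Real.sqrt_nonneg a
      have h2 : d x ≤ -(mu / 2) * h x + lam * a' + 2 * lam * g x * s := by
        have e1 : lam * a ≤ lam * a' := by nlinarith
        have e2 : 2 * lam * Real.sqrt (h x) * Real.sqrt a ≤ 2 * lam * g x * s := by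
          rw [hsq]
          have h0 : (0:ℝ) ≤ 2 * lam * g x := mul_nonneg (by positivity) (hgpos x).le
          exact mul_le_mul_of_nonneg_left hsa h0
        linarith
      have hB'eq : B' x = -(mu / 2) * g x ^ 2 + (mu / 2 + 3 * lam) * (g x * s) := by
        have hgx : Real.exp (-(mu / 4) * x) * b = g x - K * s := by rw [hgeval]; ring
        simp only [hB'def]
        rw [show 2 * g x * (Real.exp (-(mu / 4) * x) * -(mu / 4) * b)
            = -(mu / 2) * g x * (Real.exp (-(mu / 4) * x) * b) by ring, hgx]
        have : mu / 2 * K * (g x * s) = (mu / 2 + 3 * lam) * (g x * s) := by rw [hKmul]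
        nlinarith [this]
      rw [hB'eq]
      have hgK : K * s ≤ g x := hglb x
      have hgs2 : s ^ 2 ≤ g x * s := by nlinarith [hgK, hspos, hK1]
      have hmain : lam * a' + 2 * lam * g x * s
          < (mu / 2 + 3 * lam) * (g x * s) := by
        rw [← hs2]
        nlinarith [hgs2, hspos, hmu, hlam, mul_pos hspos hspos]
      have hhx : h x = g x ^ 2 := by rw [hcontact, hBeval]
      rw [hhx] at h2
      linarith
  -- conclude: B t ≤ 2 e^{-μt/2} h 0 + C a'
  have hexp2 : Real.exp (-(mu / 4) * t) ^ 2 = Real.exp (-(mu * t / 2)) := by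
    rw [← Real.exp_nat_mul]
    congr 1; ring
  have hfinal : B t ≤ 2 * Real.exp (-(mu * t / 2)) * h 0 + C * a' := by
    rw [hBeval, hgeval, ← hb2, ← hexp2, hC, ← hs2]
    nlinarith [sq_nonneg (Real.exp (-(mu / 4) * t) * b - K * s),
      mul_nonneg (Real.exp_pos (-(mu / 4) * t)).le hbnn, hKs]
  have hsplit : C * a' = C * a + ε := by
    rw [ha']; field_simp
  linarith [key, hfinal]
end

section
/- Let f, g be probability measures on ℝ with finite second moments, let (X,Y) be an optimal W₂ coupling of (f,g), and let θ be uniform on [0,2π) independent of (X,Y). Define f' = Law(X cos θ − Z sin θ) and g' = Law(Y cos θ − Z sin θ) for a further independent random variable Z with law γ. Then W₂²(f', g') ≤ (1/2) W₂²(f, g). -/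
open MeasureTheory Real

/-- Squared 2-Wasserstein distance on probability measures on `ℝ`,
defined as the infimum of the quadratic transport cost over couplings. -/
noncomputable def W2sq (f g : Measure ℝ) : ℝ :=
  sInf { c : ℝ | ∃ μ : Measure (ℝ × ℝ), IsProbabilityMeasure μ ∧
    μ.map Prod.fst = f ∧ μ.map Prod.snd = g ∧ c = ∫ p, (p.1 - p.2) ^ 2 ∂μ }

/-!
Run the optimal coupling `(X, Y)` through the thermostat with the same `θ` and `Z` on both sides.
The `Z sin θ` terms cancel, so the new pair is a coupling of `f'` and `g'` of cost
`E[(X - Y)² cos² θ] = E[(X - Y)²] E[cos² θ] = W₂²(f, g) / 2`, by independence and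
`E[cos² θ] = 1/2`.
-/

theorem W2sq_map_le {Ω : Type*} [MeasurableSpace Ω] (P : Measure Ω) [IsProbabilityMeasure P]
    {U V : Ω → ℝ} (hU : Measurable U) (hV : Measurable V) :
    W2sq (P.map U) (P.map V) ≤ ∫ ω, (U ω - V ω) ^ 2 ∂P := by
  have hUV : Measurable fun ω => (U ω, V ω) := hU.prodMk hV
  refine csInf_le ⟨0, ?_⟩ ⟨P.map fun ω => (U ω, V ω),
    Measure.isProbabilityMeasure_map hUV.aemeasurable,
    by rw [Measure.map_map measurable_fst hUV]; rfl,
    by rw [Measure.map_map measurable_snd hUV]; rfl, ?_⟩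
  · rintro c ⟨μ, -, -, -, rfl⟩
    exact integral_nonneg fun p => sq_nonneg _
  · rw [integral_map hUV.aemeasurable (by fun_prop)]

theorem integral_cos_sq_thetaUnif : ∫ x, cos x ^ 2 ∂thetaUnif = 1 / 2 := by
  have h2π : (0 : ℝ) < 2 * π := by positivity
  rw [thetaUnif, integral_smul_measure, Measure.restrict_congr_set Ico_ae_eq_Ioc,
    ← intervalIntegral.integral_of_le h2π.le, integral_cos_sq, ENNReal.toReal_inv,
    ENNReal.toReal_ofReal h2π.le]
  simp only [sin_two_pi, sin_zero, smul_eq_mul]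
  field_simp
  ring

open ProbabilityTheory in
theorem thermostat_W2_contraction_general
    {Ω : Type*} [MeasurableSpace Ω] (P : Measure Ω) [IsProbabilityMeasure P]
    (f g : Measure ℝ)
    (X Y Z Θ : Ω → ℝ) (hX : Measurable X) (hY : Measurable Y)
    (hZ : Measurable Z) (hΘ : Measurable Θ)
    (hlawΘ : P.map Θ = thetaUnif)
    (hopt : ∫ ω, (X ω - Y ω) ^ 2 ∂P = W2sq f g)
    (hindep : IndepFun (fun ω => (X ω, Y ω)) (fun ω => (Z ω, Θ ω)) P) :
    W2sq (P.map (fun ω => X ω * Real.cos (Θ ω) - Z ω * Real.sin (Θ ω)))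
        (P.map (fun ω => Y ω * Real.cos (Θ ω) - Z ω * Real.sin (Θ ω)))
      ≤ (1 / 2) * W2sq f g := by
  have hcos : ∫ ω, cos (Θ ω) ^ 2 ∂P = 1 / 2 := by
    rw [← integral_cos_sq_thetaUnif, ← hlawΘ, integral_map hΘ.aemeasurable (by fun_prop)]
  calc _ ≤ ∫ ω, ((X ω * cos (Θ ω) - Z ω * sin (Θ ω)) -
          (Y ω * cos (Θ ω) - Z ω * sin (Θ ω))) ^ 2 ∂P :=
        W2sq_map_le P (by fun_prop) (by fun_prop)
    _ = ∫ ω, (X ω - Y ω) ^ 2 * cos (Θ ω) ^ 2 ∂P := by congr with ω; ring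
    _ = (∫ ω, (X ω - Y ω) ^ 2 ∂P) * ∫ ω, cos (Θ ω) ^ 2 ∂P :=
        (hindep.comp (φ := fun p : ℝ × ℝ => (p.1 - p.2) ^ 2)
          (ψ := fun q : ℝ × ℝ => cos q.2 ^ 2)
          (by fun_prop) (by fun_prop)).integral_fun_mul_eq_mul_integral
          (by fun_prop) (by fun_prop)
    _ = (1 / 2) * W2sq f g := by rw [hopt, hcos, mul_comm]

open ProbabilityTheory in
theorem thermostat_W2_contraction
    {Ω : Type*} [MeasurableSpace Ω] (P : Measure Ω) [IsProbabilityMeasure P]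
    (f g γ : Measure ℝ) [IsProbabilityMeasure f] [IsProbabilityMeasure g]
    [IsProbabilityMeasure γ]
    (hf2 : Integrable (fun x : ℝ => x ^ 2) f) (hg2 : Integrable (fun x : ℝ => x ^ 2) g)
    (hγ2 : Integrable (fun x : ℝ => x ^ 2) γ)
    (X Y Z Θ : Ω → ℝ) (hX : Measurable X) (hY : Measurable Y)
    (hZ : Measurable Z) (hΘ : Measurable Θ)
    (hlawX : P.map X = f) (hlawY : P.map Y = g)
    (hlawZ : P.map Z = γ) (hlawΘ : P.map Θ = thetaUnif)
    (hopt : ∫ ω, (X ω - Y ω) ^ 2 ∂P = W2sq f g)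
    (hindep : IndepFun (fun ω => (X ω, Y ω)) (fun ω => (Z ω, Θ ω)) P)
    (hZΘ : IndepFun Z Θ P) :
    W2sq (P.map (fun ω => X ω * Real.cos (Θ ω) - Z ω * Real.sin (Θ ω)))
        (P.map (fun ω => Y ω * Real.cos (Θ ω) - Z ω * Real.sin (Θ ω)))
      ≤ (1 / 2) * W2sq f g :=
  thermostat_W2_contraction_general P f g X Y Z Θ hX hY hZ hΘ hlawΘ hopt hindep
end

section
/- Let f, g be probability measures on ℝ with finite second moments and let (X,Y), (X*,Y*) be two independent optimal W₂ couplings of (f,g). Let θ be uniform on [0,2π), independent of everything. Define f' = Law(X cos θ − X* sin θ) and g' = Law(Y cos θ − Y* sin θ). Then W₂²(f', g') ≤ W₂²(f, g), i.e. the Kac collision map ν ↦ B[ν,ν] is non-expanding in W₂. -/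
/-!
Rotate both optimal couplings by the same angle: the pair
`(X cos θ - X* sin θ, Y cos θ - Y* sin θ)` couples `f'` and `g'`, and its cost is
`E[(U cos θ - V sin θ)²]` with `U = X - Y`, `V = X* - Y*`. Averaging over `θ` first, which is
independent of `(U, V)`, gives `(E U² + E V²) / 2 = W₂²(f, g)`: the cross term dies because
`cos θ sin θ` has mean zero.
-/

open MeasureTheory Real

open ProbabilityTheory

instance isProbabilityMeasure_thetaUnif : IsProbabilityMeasure thetaUnif where
  measure_univ := by
    rw [thetaUnif, Measure.smul_apply, Measure.restrict_apply_univ, Real.volume_Ico, sub_zero,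
      smul_eq_mul, ENNReal.inv_mul_cancel (by simp [pi_pos]) ENNReal.ofReal_ne_top]

lemma integral_thetaUnif (h : ℝ → ℝ) :
    ∫ t, h t ∂thetaUnif = (2 * π)⁻¹ * ∫ t in 0..2 * π, h t := by
  rw [thetaUnif, integral_smul_measure, ENNReal.toReal_inv, ENNReal.toReal_ofReal (by positivity),
    setIntegral_congr_set Ico_ae_eq_Ioc, ← intervalIntegral.integral_of_le (by positivity),
    smul_eq_mul]

lemma Continuous.integrable_thetaUnif_s17 {F : ℝ → ℝ} (hF : Continuous F) :
    Integrable F thetaUnif :=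
  (hF.integrableOn_Icc.mono_set Set.Ico_subset_Icc_self).smul_measure
    (ENNReal.inv_ne_top.2 (by simp [pi_pos]))

lemma integral_rotate_sq_thetaUnif (u v : ℝ) :
    ∫ t, (u * cos t - v * sin t) ^ 2 ∂thetaUnif = (u ^ 2 + v ^ 2) / 2 := by
  have hexpand : ∀ t, (u * cos t - v * sin t) ^ 2
      = u ^ 2 * cos t ^ 2 + v ^ 2 * sin t ^ 2 - 2 * u * v * (sin t * cos t) := fun t => by ring
  have hcont : ∀ {F : ℝ → ℝ}, Continuous F → IntervalIntegrable F volume 0 (2 * π) :=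
    fun hF => hF.intervalIntegrable _ _
  simp_rw [integral_thetaUnif, hexpand]
  rw [intervalIntegral.integral_sub (hcont (by fun_prop)) (hcont (by fun_prop)),
    intervalIntegral.integral_add (hcont (by fun_prop)) (hcont (by fun_prop)),
    intervalIntegral.integral_const_mul, intervalIntegral.integral_const_mul,
    intervalIntegral.integral_const_mul, integral_cos_sq, integral_sin_sq, integral_sin_mul_cos₁]
  simp only [sin_two_pi, cos_two_pi, sin_zero, cos_zero]
  field_simp
  ring

lemma integral_prod_thetaUnif_rotate_sq {μ : Measure (ℝ × ℝ)} [SFinite μ]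
    (h : Integrable (fun w : ℝ × ℝ => w.1 ^ 2 + w.2 ^ 2) μ) :
    ∫ p, (p.1.1 * cos p.2 - p.1.2 * sin p.2) ^ 2 ∂(μ.prod thetaUnif)
      = ∫ w, (w.1 ^ 2 + w.2 ^ 2) / 2 ∂μ := by
  have hmeas : AEStronglyMeasurable
      (fun p : (ℝ × ℝ) × ℝ => (p.1.1 * cos p.2 - p.1.2 * sin p.2) ^ 2) (μ.prod thetaUnif) :=
    (by fun_prop : Continuous _).aestronglyMeasurable
  have hint : Integrable (fun p : (ℝ × ℝ) × ℝ => (p.1.1 * cos p.2 - p.1.2 * sin p.2) ^ 2)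
      (μ.prod thetaUnif) := by
    refine (integrable_prod_iff hmeas).2 ⟨Filter.Eventually.of_forall fun w => ?_, ?_⟩
    · exact Continuous.integrable_thetaUnif_s17 (by fun_prop)
    · simp only [Real.norm_eq_abs, abs_pow, sq_abs, integral_rotate_sq_thetaUnif]
      exact h.div_const 2
  rw [integral_prod _ hint]
  simp only [integral_rotate_sq_thetaUnif]

lemma W2sq_map_le_integral {Ω : Type*} [MeasurableSpace Ω] {P : Measure Ω}
    [IsProbabilityMeasure P] {A B : Ω → ℝ} (hA : AEMeasurable A P) (hB : AEMeasurable B P) :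
    W2sq (P.map A) (P.map B) ≤ ∫ ω, (A ω - B ω) ^ 2 ∂P := by
  refine csInf_le ⟨0, ?_⟩
    ⟨P.map fun ω => (A ω, B ω), Measure.isProbabilityMeasure_map (hA.prodMk hB), ?_, ?_, ?_⟩
  · rintro c ⟨μ, -, -, -, rfl⟩
    exact integral_nonneg fun p => sq_nonneg _
  · rw [AEMeasurable.map_map_of_aemeasurable measurable_fst.aemeasurable (hA.prodMk hB)]; rfl
  · rw [AEMeasurable.map_map_of_aemeasurable measurable_snd.aemeasurable (hA.prodMk hB)]; rfl
  · rw [integral_map (hA.prodMk hB) (by fun_prop)]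

lemma memLp_two_of_integrable_sq_map {Ω : Type*} [MeasurableSpace Ω] {P : Measure Ω} {Z : Ω → ℝ}
    (hZ : AEMeasurable Z P) (h : Integrable (fun x : ℝ => x ^ 2) (P.map Z)) : MemLp Z 2 P :=
  (memLp_map_measure_iff aestronglyMeasurable_id hZ).1
    ((memLp_two_iff_integrable_sq aestronglyMeasurable_id).2 h)

lemma integral_rotate_sq_of_indepFun {Ω : Type*} [MeasurableSpace Ω] {P : Measure Ω}
    [IsFiniteMeasure P] {U V Θ : Ω → ℝ} (hU : MemLp U 2 P) (hV : MemLp V 2 P)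
    (hΘ : Measurable Θ) (hlawΘ : P.map Θ = thetaUnif)
    (hindep : IndepFun (fun ω => (U ω, V ω)) Θ P) :
    ∫ ω, (U ω * cos (Θ ω) - V ω * sin (Θ ω)) ^ 2 ∂P
      = (∫ ω, U ω ^ 2 ∂P + ∫ ω, V ω ^ 2 ∂P) / 2 := by
  have hW : AEMeasurable (fun ω => (U ω, V ω)) P := hU.1.aemeasurable.prodMk hV.1.aemeasurable
  have hU2 := (memLp_two_iff_integrable_sq hU.1).1 hU
  have hV2 := (memLp_two_iff_integrable_sq hV.1).1 hV
  have hjoint :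
      P.map (fun ω => ((U ω, V ω), Θ ω)) = (P.map fun ω => (U ω, V ω)).prod thetaUnif := by
    rw [← hlawΘ]
    exact (indepFun_iff_map_prod_eq_prod_map_map hW hΘ.aemeasurable).1 hindep
  calc ∫ ω, (U ω * cos (Θ ω) - V ω * sin (Θ ω)) ^ 2 ∂P
      = ∫ p, (p.1.1 * cos p.2 - p.1.2 * sin p.2) ^ 2 ∂(P.map fun ω => ((U ω, V ω), Θ ω)) :=
        (integral_map (f := fun p : (ℝ × ℝ) × ℝ => (p.1.1 * cos p.2 - p.1.2 * sin p.2) ^ 2)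
          (hW.prodMk hΘ.aemeasurable) (by fun_prop)).symm
    _ = ∫ w, (w.1 ^ 2 + w.2 ^ 2) / 2 ∂(P.map fun ω => (U ω, V ω)) := by
        rw [hjoint, integral_prod_thetaUnif_rotate_sq]
        exact (integrable_map_measure (by fun_prop) hW).2 (hU2.add hV2)
    _ = ∫ ω, (U ω ^ 2 + V ω ^ 2) / 2 ∂P := integral_map hW (by fun_prop)
    _ = (∫ ω, U ω ^ 2 ∂P + ∫ ω, V ω ^ 2 ∂P) / 2 := by rw [integral_div, integral_add hU2 hV2]

open ProbabilityTheory in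
theorem kac_collision_W2_nonexpanding_general
    {Ω : Type*} [MeasurableSpace Ω] (P : Measure Ω) [IsProbabilityMeasure P]
    (f g : Measure ℝ)
    (hf2 : Integrable (fun x : ℝ => x ^ 2) f) (hg2 : Integrable (fun x : ℝ => x ^ 2) g)
    (X Y Xs Ys Θ : Ω → ℝ) (hX : Measurable X) (hY : Measurable Y)
    (hXs : Measurable Xs) (hYs : Measurable Ys) (hΘ : Measurable Θ)
    (hlawX : P.map X = f) (hlawY : P.map Y = g)
    (hlawXs : P.map Xs = f) (hlawYs : P.map Ys = g)
    (hlawΘ : P.map Θ = thetaUnif)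
    (hopt : ∫ ω, (X ω - Y ω) ^ 2 ∂P = W2sq f g)
    (hopts : ∫ ω, (Xs ω - Ys ω) ^ 2 ∂P = W2sq f g)
    (hindepΘ : IndepFun (fun ω => (X ω, Y ω, Xs ω, Ys ω)) Θ P) :
    W2sq (P.map (fun ω => X ω * Real.cos (Θ ω) - Xs ω * Real.sin (Θ ω)))
        (P.map (fun ω => Y ω * Real.cos (Θ ω) - Ys ω * Real.sin (Θ ω)))
      ≤ W2sq f g := by
  have hU : MemLp (X - Y) 2 P :=
    (memLp_two_of_integrable_sq_map hX.aemeasurable (hlawX ▸ hf2)).sub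
      (memLp_two_of_integrable_sq_map hY.aemeasurable (hlawY ▸ hg2))
  have hV : MemLp (Xs - Ys) 2 P :=
    (memLp_two_of_integrable_sq_map hXs.aemeasurable (hlawXs ▸ hf2)).sub
      (memLp_two_of_integrable_sq_map hYs.aemeasurable (hlawYs ▸ hg2))
  have hindep : IndepFun (fun ω => ((X - Y) ω, (Xs - Ys) ω)) Θ P :=
    hindepΘ.comp (φ := fun q : ℝ × ℝ × ℝ × ℝ => (q.1 - q.2.1, q.2.2.1 - q.2.2.2))
      (by fun_prop) measurable_id
  calc _ ≤ ∫ ω, (X ω * cos (Θ ω) - Xs ω * sin (Θ ω)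
          - (Y ω * cos (Θ ω) - Ys ω * sin (Θ ω))) ^ 2 ∂P :=
        W2sq_map_le_integral (by fun_prop) (by fun_prop)
    _ = ∫ ω, ((X - Y) ω * cos (Θ ω) - (Xs - Ys) ω * sin (Θ ω)) ^ 2 ∂P := by
        congr with ω
        simp only [Pi.sub_apply]
        ring
    _ = (W2sq f g + W2sq f g) / 2 := by
        rw [integral_rotate_sq_of_indepFun hU hV hΘ hlawΘ hindep]
        simp only [Pi.sub_apply, hopt, hopts]
    _ = W2sq f g := by ring

open ProbabilityTheory in
theorem kac_collision_W2_nonexpanding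
    {Ω : Type*} [MeasurableSpace Ω] (P : Measure Ω) [IsProbabilityMeasure P]
    (f g : Measure ℝ) [IsProbabilityMeasure f] [IsProbabilityMeasure g]
    (hf2 : Integrable (fun x : ℝ => x ^ 2) f) (hg2 : Integrable (fun x : ℝ => x ^ 2) g)
    (X Y Xs Ys Θ : Ω → ℝ) (hX : Measurable X) (hY : Measurable Y)
    (hXs : Measurable Xs) (hYs : Measurable Ys) (hΘ : Measurable Θ)
    (hlawX : P.map X = f) (hlawY : P.map Y = g)
    (hlawXs : P.map Xs = f) (hlawYs : P.map Ys = g)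
    (hlawΘ : P.map Θ = thetaUnif)
    (hopt : ∫ ω, (X ω - Y ω) ^ 2 ∂P = W2sq f g)
    (hopts : ∫ ω, (Xs ω - Ys ω) ^ 2 ∂P = W2sq f g)
    (hindep : IndepFun (fun ω => (X ω, Y ω)) (fun ω => (Xs ω, Ys ω)) P)
    (hindepΘ : IndepFun (fun ω => (X ω, Y ω, Xs ω, Ys ω)) Θ P) :
    W2sq (P.map (fun ω => X ω * Real.cos (Θ ω) - Xs ω * Real.sin (Θ ω)))
        (P.map (fun ω => Y ω * Real.cos (Θ ω) - Ys ω * Real.sin (Θ ω)))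
      ≤ W2sq f g :=
  kac_collision_W2_nonexpanding_general P f g hf2 hg2 X Y Xs Ys Θ hX hY hXs hYs hΘ hlawX hlawY
    hlawXs hlawYs hlawΘ hopt hopts hindepΘ
end
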